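/- Suppose G^{μν}(x) solves, for fixed y, the pair of distributional equations [−αΔ_x + m₁²]·i∂^μ_x G^{μν}(x−y) = i∂^ν_x δ(x−y) and [−Δ_x + m₂²]·ε^{ρμ} i∂^ρ_x G^{μν}(x−y) = ε^{ρν} i∂^ρ_x δ(x−y) (with m₁² = μ²−σ−ν > 0, m₂² = μ²−ν₅ > 0), and G^{μν} is a tempered distribution whose Fourier transform is a locally integrable matrix function. Then Ĝ^{μν}(k) = δ^{μν}/(k²+m₂²) − (1/(k²+m₂²) − 1/(αk²+m₁²))·k^μk^ν/k², i.e. G equals the free meson propagator G₀ with mass parameters μ²−ν₅ and σ+ν−ν₅. -/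

import Mathlib

/-- The components of `k ∈ ℝ²` as a function `Fin 2 → ℝ`. -/
def kvec (k : ℝ × ℝ) : Fin 2 → ℝ := ![k.1, k.2]

/-- `k² = (k⁰)² + (k¹)²`. -/
def ksq (k : ℝ × ℝ) : ℝ := k.1 ^ 2 + k.2 ^ 2

/-- The 2D Levi-Civita symbol, `ε^{01} = 1 = −ε^{10}`. -/
def epsR : Fin 2 → Fin 2 → ℝ := fun μ ν => !![0, 1; -1, 0] μ ν

/-!
For `k ≠ 0` the vectors `k` and `k^⊥ = (-k¹, k⁰)` are orthogonal, both of squared length `k²`,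
so each column `Ĝ^{·ν}(k)` is determined by its components along them:
`k² Ĝ^{·ν} = (k·Ĝ^{·ν}) k + (k^⊥·Ĝ^{·ν}) k^⊥`. The longitudinal equation gives
`k·Ĝ^{·ν} = k^ν/(αk²+m1)`, the transverse one `k^⊥·Ĝ^{·ν} = k^{⊥ν}/(k²+m2)`, and
`k^{⊥μ} k^{⊥ν} = k² δ^{μν} − k^μ k^ν` turns the sum into the free propagator.
The two denominators cannot vanish, since they multiply to the nonzero vectors `k` and `k^⊥`.
-/

open Matrix

/-- `k^⊥ = ε^{ρμ} k^ρ`, the rotation of `k` by a right angle. -/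
def kperp (k : ℝ × ℝ) : Fin 2 → ℝ := ![-k.2, k.1]

lemma ksq_ne_zero {k : ℝ × ℝ} (hk : k ≠ 0) : ksq k ≠ 0 := by
  have hcomp : k.1 ≠ 0 ∨ k.2 ≠ 0 := by
    by_contra! h
    exact hk (Prod.ext h.1 h.2)
  unfold ksq
  rcases hcomp with h | h <;> positivity

lemma kvec_ne_zero {k : ℝ × ℝ} (hk : k ≠ 0) : kvec k ≠ 0 := by
  intro h
  exact hk (Prod.ext (by simpa [kvec] using congrFun h 0) (by simpa [kvec] using congrFun h 1))

lemma kperp_ne_zero {k : ℝ × ℝ} (hk : k ≠ 0) : kperp k ≠ 0 := by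
  intro h
  exact hk (Prod.ext (by simpa [kperp] using congrFun h 1) (by simpa [kperp] using congrFun h 0))

lemma sum_sum_epsR_mul_kvec_mul (k : ℝ × ℝ) (w : Fin 2 → ℝ) :
    ∑ ρ : Fin 2, ∑ μ : Fin 2, epsR ρ μ * kvec k ρ * w μ = kperp k ⬝ᵥ w := by
  simp only [epsR, kvec, kperp, dotProduct, Fin.sum_univ_two, of_apply, cons_val', cons_val_zero,
    cons_val_one, cons_val_fin_one, Fin.isValue]
  ring

lemma sum_epsR_mul_kvec (k : ℝ × ℝ) (ν : Fin 2) :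
    ∑ ρ : Fin 2, epsR ρ ν * kvec k ρ = kperp k ν := by
  fin_cases ν <;> simp [Fin.sum_univ_two, epsR, kvec, kperp]

lemma ksq_mul_eq_kvec_dotProduct_add_kperp_dotProduct (k : ℝ × ℝ) (w : Fin 2 → ℝ) (μ : Fin 2) :
    ksq k * w μ = (kvec k ⬝ᵥ w) * kvec k μ + (kperp k ⬝ᵥ w) * kperp k μ := by
  fin_cases μ <;>
    simp only [ksq, kvec, kperp, dotProduct, Fin.sum_univ_two, Fin.zero_eta, Fin.mk_one,
      Fin.isValue, cons_val_zero, cons_val_one, cons_val_fin_one] <;>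
    ring

lemma kperp_mul_kperp (k : ℝ × ℝ) (μ ν : Fin 2) :
    kperp k μ * kperp k ν = ksq k * (if μ = ν then 1 else 0) - kvec k μ * kvec k ν := by
  fin_cases μ <;> fin_cases ν <;> simp [ksq, kvec, kperp] <;> ring

lemma ne_zero_of_forall_mul_eq {ι R : Type*} [MulZeroClass R] {c : R} {x v : ι → R}
    (h : ∀ i, c * x i = v i) (hv : v ≠ 0) : c ≠ 0 := by
  rintro rfl
  exact hv (funext fun i => by simpa using (h i).symm)

theorem stmt17_general (α m1 m2 : ℝ)
    (G : ℝ × ℝ → Fin 2 → Fin 2 → ℝ)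
    (hlong : ∀ k : ℝ × ℝ, k ≠ 0 → ∀ ν : Fin 2,
      (α * ksq k + m1) * ∑ μ : Fin 2, kvec k μ * G k μ ν = kvec k ν)
    (htrans : ∀ k : ℝ × ℝ, k ≠ 0 → ∀ ν : Fin 2,
      (ksq k + m2) * ∑ ρ : Fin 2, ∑ μ : Fin 2, epsR ρ μ * kvec k ρ * G k μ ν
        = ∑ ρ : Fin 2, epsR ρ ν * kvec k ρ) :
    ∀ k : ℝ × ℝ, k ≠ 0 → ∀ μ ν : Fin 2,
      G k μ ν = (if μ = ν then 1 else 0) / (ksq k + m2)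
        - (1 / (ksq k + m2) - 1 / (α * ksq k + m1)) * kvec k μ * kvec k ν / ksq k := by
  intro k hk μ ν
  have hlong' : ∀ ν, (α * ksq k + m1) * (kvec k ⬝ᵥ fun μ => G k μ ν) = kvec k ν :=
    hlong k hk
  have htrans' : ∀ ν, (ksq k + m2) * (kperp k ⬝ᵥ fun μ => G k μ ν) = kperp k ν := fun ν => by
    rw [← sum_sum_epsR_mul_kvec_mul, ← sum_epsR_mul_kvec]
    exact htrans k hk ν
  have hden₁ := ne_zero_of_forall_mul_eq hlong' (kvec_ne_zero hk)
  have hden₂ := ne_zero_of_forall_mul_eq htrans' (kperp_ne_zero hk)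
  have hksq := ksq_ne_zero hk
  have hkvecG : (kvec k ⬝ᵥ fun μ => G k μ ν) = kvec k ν / (α * ksq k + m1) := by
    rw [eq_div_iff hden₁, mul_comm]; exact hlong' ν
  have hkperpG : (kperp k ⬝ᵥ fun μ => G k μ ν) = kperp k ν / (ksq k + m2) := by
    rw [eq_div_iff hden₂, mul_comm]; exact htrans' ν
  have hdecomp := ksq_mul_eq_kvec_dotProduct_add_kperp_dotProduct k (fun μ => G k μ ν) μ
  rw [hkvecG, hkperpG, div_mul_eq_mul_div, div_mul_eq_mul_div, mul_comm (kperp k ν),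
    kperp_mul_kperp] at hdecomp
  apply mul_left_cancel₀ hksq
  rw [hdecomp]
  field_simp
  ring

/-- If `Ĝ` satisfies, for every `k ≠ 0`, the Fourier-space versions of the
longitudinal equation `[−αΔ + m₁²] i∂^μ G^{μν} = i∂^ν δ` and of the transverse
equation `[−Δ + m₂²] ε^{ρμ} i∂^ρ G^{μν} = ε^{ρν} i∂^ρ δ`, then `Ĝ` is the free
meson propagator with mass parameters `m₂², m₁²`:
`Ĝ^{μν}(k) = δ^{μν}/(k²+m₂²) − (1/(k²+m₂²) − 1/(αk²+m₁²)) k^μk^ν/k²`. -/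
theorem stmt17 (α m1 m2 : ℝ) (hm1 : 0 < m1) (hm2 : 0 < m2) (hα : 0 < α)
    (G : ℝ × ℝ → Fin 2 → Fin 2 → ℝ)
    (hlong : ∀ k : ℝ × ℝ, k ≠ 0 → ∀ ν : Fin 2,
      (α * ksq k + m1) * ∑ μ : Fin 2, kvec k μ * G k μ ν = kvec k ν)
    (htrans : ∀ k : ℝ × ℝ, k ≠ 0 → ∀ ν : Fin 2,
      (ksq k + m2) * ∑ ρ : Fin 2, ∑ μ : Fin 2, epsR ρ μ * kvec k ρ * G k μ ν
        = ∑ ρ : Fin 2, epsR ρ ν * kvec k ρ) :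
    ∀ k : ℝ × ℝ, k ≠ 0 → ∀ μ ν : Fin 2,
      G k μ ν = (if μ = ν then 1 else 0) / (ksq k + m2)
        - (1 / (ksq k + m2) - 1 / (α * ksq k + m1)) * kvec k μ * kvec k ν / ksq k :=
  stmt17_general α m1 m2 G hlong htrans
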